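/- Let (p,q,(u,v)) be an extremal of the reduced system on a nondegenerate interval [t0,t1] that is u-singular, i.e. φ_u(t) = 0 for all t ∈ [t0,t1]. Then: y(t) = 0 for all t ∈ [t0,t1] (the trajectory lies on the x-axis); the covector p is constant on [t0,t1] with p_y = 0 and p_x < 0; u(t) = 0 for a.e. t ∈ [t0,t1]; and v(t) = η for a.e. t ∈ [t0,t1]. -/

import Mathlib

open MeasureTheory Set

noncomputable section

/-- An admissible pair of the reduced system on `[t0, t1]`: a measurable control
`(u, v)` with values in `[-1,1] × [ν,η]` together with a Lipschitz curve
`q = (x, y)` satisfying `x' = -v - u y`, `y' = u x` a.e. -/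
def ReducedAdm (ν η t0 t1 : ℝ) (q : ℝ → ℝ × ℝ) (u v : ℝ → ℝ) : Prop :=
  Measurable u ∧ Measurable v ∧
  (∀ᵐ t ∂volume, t ∈ Icc t0 t1 → u t ∈ Icc (-1 : ℝ) 1 ∧ v t ∈ Icc ν η) ∧
  (∃ K, LipschitzOnWith K q (Icc t0 t1)) ∧
  (∀ᵐ t ∂volume, t ∈ Icc t0 t1 →
    HasDerivWithinAt q (-(v t) - u t * (q t).2, u t * (q t).1) (Icc t0 t1) t)

/-- The switching function `φ_u(t) = p_y(t) x(t) - p_x(t) y(t)` of the reduced system. -/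
def phiU (p q : ℝ → ℝ × ℝ) (t : ℝ) : ℝ := (p t).2 * (q t).1 - (p t).1 * (q t).2

/-- The switching function `φ_v(t) = -p_x(t)` of the reduced system. -/
def phiV (p : ℝ → ℝ × ℝ) (t : ℝ) : ℝ := -(p t).1

/-- An extremal of the reduced system on `[t0, t1]` with multiplier `lam ≥ 0`: an
admissible pair together with a Lipschitz never vanishing covector `p = (p_x, p_y)`
satisfying the adjoint equation `p_x' = -u p_y`, `p_y' = u p_x` a.e., the maximality
condition a.e., and constancy of the Hamiltonian `v φ_v + u φ_u = lam` a.e. -/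
def ReducedExtremal (ν η t0 t1 : ℝ) (p q : ℝ → ℝ × ℝ) (u v : ℝ → ℝ) (lam : ℝ) : Prop :=
  ReducedAdm ν η t0 t1 q u v ∧
  (∃ K, LipschitzOnWith K p (Icc t0 t1)) ∧
  (∀ t ∈ Icc t0 t1, p t ≠ 0) ∧
  (∀ᵐ t ∂volume, t ∈ Icc t0 t1 →
    HasDerivWithinAt p (-(u t) * (p t).2, u t * (p t).1) (Icc t0 t1) t) ∧
  0 ≤ lam ∧
  (∀ᵐ t ∂volume, t ∈ Icc t0 t1 →
    (∀ w ∈ Icc (-1 : ℝ) 1, ∀ z ∈ Icc ν η,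
      z * phiV p t + w * phiU p q t ≤ v t * phiV p t + u t * phiU p q t) ∧
    v t * phiV p t + u t * phiU p q t = lam)

/-!
Differentiating `φ_u ≡ 0` along the dynamics gives `0 = φ_u' = -v p_y`, and `v ≥ ν > 0`, so
`p_y ≡ 0`. Since `p` never vanishes, `p_x ≠ 0`; then `φ_u = -p_x y` gives `y = 0`, and the
adjoint equation `0 = p_y' = u p_x` gives `u = 0`. The Hamiltonian now reads `-v p_x = λ ≥ 0`,
so `φ_v = -p_x > 0`, and maximizing `z φ_v` over `z ∈ [ν, η]` forces `v = η`, hence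
`p_x = -λ/η` a.e. and, by continuity, everywhere.
-/

theorem HasDerivWithinAt.fst {f : ℝ → ℝ × ℝ} {d : ℝ × ℝ} {s : Set ℝ} {x : ℝ}
    (h : HasDerivWithinAt f d s x) : HasDerivWithinAt (fun t => (f t).1) d.1 s x :=
  (ContinuousLinearMap.fst ℝ ℝ ℝ).hasFDerivAt.comp_hasDerivWithinAt x h

theorem HasDerivWithinAt.snd {f : ℝ → ℝ × ℝ} {d : ℝ × ℝ} {s : Set ℝ} {x : ℝ}
    (h : HasDerivWithinAt f d s x) : HasDerivWithinAt (fun t => (f t).2) d.2 s x :=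
  (ContinuousLinearMap.snd ℝ ℝ ℝ).hasFDerivAt.comp_hasDerivWithinAt x h

theorem HasDerivWithinAt.eq_zero_of_eqOn_const {f : ℝ → ℝ} {f' c x : ℝ} {s : Set ℝ}
    (h : HasDerivWithinAt f f' s x) (hs : UniqueDiffWithinAt ℝ s x) (hx : x ∈ s)
    (hf : EqOn f (fun _ => c) s) : f' = 0 :=
  hs.eq_deriv s h ((hasDerivWithinAt_const x s c).congr hf (hf hx))

theorem eqOn_Icc_of_ae_eq_const {f : ℝ → ℝ} {a b c : ℝ} (hab : a < b)
    (hf : ContinuousOn f (Icc a b)) (hc : ∀ᵐ t ∂volume, t ∈ Icc a b → f t = c) :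
    ∀ t ∈ Icc a b, f t = c :=
  Measure.eqOn_Icc_of_ae_eq volume hab.ne ((ae_restrict_iff' measurableSet_Icc).2 hc) hf
    continuousOn_const

theorem hasDerivWithinAt_phiU {p q : ℝ → ℝ × ℝ} {s : Set ℝ} {t : ℝ} {u v : ℝ}
    (hq : HasDerivWithinAt q (-v - u * (q t).2, u * (q t).1) s t)
    (hp : HasDerivWithinAt p (-u * (p t).2, u * (p t).1) s t) :
    HasDerivWithinAt (phiU p q) (-v * (p t).2) s t :=
  ((hp.snd.mul hq.fst).sub (hp.fst.mul hq.snd)).congr_deriv (by ring)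

theorem ReducedAdm.v_pos {ν η t0 t1 : ℝ} {q : ℝ → ℝ × ℝ} {u v : ℝ → ℝ}
    (hadm : ReducedAdm ν η t0 t1 q u v) (hν : 0 < ν) :
    ∀ᵐ t ∂volume, t ∈ Icc t0 t1 → 0 < v t := by
  obtain ⟨-, -, hbound, -, -⟩ := hadm
  filter_upwards [hbound] with t hbound ht
  exact hν.trans_le (hbound ht).2.1

namespace ReducedExtremal

variable {ν η t0 t1 lam : ℝ} {p q : ℝ → ℝ × ℝ} {u v : ℝ → ℝ}

theorem continuousOn_p (hext : ReducedExtremal ν η t0 t1 p q u v lam) :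
    ContinuousOn p (Icc t0 t1) :=
  let ⟨_, hK⟩ := hext.2.1
  hK.continuousOn

theorem p_snd_eq_zero (hext : ReducedExtremal ν η t0 t1 p q u v lam) (hν : 0 < ν)
    (ht : t0 < t1) (husing : ∀ t ∈ Icc t0 t1, phiU p q t = 0) :
    ∀ t ∈ Icc t0 t1, (p t).2 = 0 := by
  refine eqOn_Icc_of_ae_eq_const ht (continuous_snd.comp_continuousOn hext.continuousOn_p) ?_
  obtain ⟨hadm, -, -, hp, -⟩ := hext
  filter_upwards [hadm.v_pos hν, hadm.2.2.2.2, hp] with t hv hq hp htI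
  have hderiv := (hasDerivWithinAt_phiU (hq htI) (hp htI)).eq_zero_of_eqOn_const
    (uniqueDiffOn_Icc ht t htI) htI husing
  simpa [(hv htI).ne'] using hderiv

theorem p_fst_ne_zero (hext : ReducedExtremal ν η t0 t1 p q u v lam) (hν : 0 < ν)
    (ht : t0 < t1) (husing : ∀ t ∈ Icc t0 t1, phiU p q t = 0) :
    ∀ t ∈ Icc t0 t1, (p t).1 ≠ 0 := fun t htI hpx =>
  hext.2.2.1 t htI (Prod.ext hpx (hext.p_snd_eq_zero hν ht husing t htI))

theorem q_snd_eq_zero (hext : ReducedExtremal ν η t0 t1 p q u v lam) (hν : 0 < ν)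
    (ht : t0 < t1) (husing : ∀ t ∈ Icc t0 t1, phiU p q t = 0) :
    ∀ t ∈ Icc t0 t1, (q t).2 = 0 := by
  intro t htI
  have hphi := husing t htI
  rw [phiU, hext.p_snd_eq_zero hν ht husing t htI, zero_mul, zero_sub, neg_eq_zero] at hphi
  exact (mul_eq_zero.1 hphi).resolve_left (hext.p_fst_ne_zero hν ht husing t htI)

theorem u_eq_zero (hext : ReducedExtremal ν η t0 t1 p q u v lam) (hν : 0 < ν)
    (ht : t0 < t1) (husing : ∀ t ∈ Icc t0 t1, phiU p q t = 0) :
    ∀ᵐ t ∂volume, t ∈ Icc t0 t1 → u t = 0 := by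
  filter_upwards [hext.2.2.2.1] with t hp htI
  have hderiv := (hp htI).snd.eq_zero_of_eqOn_const (uniqueDiffOn_Icc ht t htI) htI
    (hext.p_snd_eq_zero hν ht husing)
  exact (mul_eq_zero.1 hderiv).resolve_right (hext.p_fst_ne_zero hν ht husing t htI)

theorem v_eq_and_p_fst_eq (hext : ReducedExtremal ν η t0 t1 p q u v lam) (hν : 0 < ν)
    (hνη : ν ≤ η) (ht : t0 < t1) (husing : ∀ t ∈ Icc t0 t1, phiU p q t = 0) :
    ∀ᵐ t ∂volume, t ∈ Icc t0 t1 → v t = η ∧ (p t).1 = -(lam / η) := by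
  have hpx := hext.p_fst_ne_zero hν ht husing
  obtain ⟨hadm, -, -, -, hlam, hmax⟩ := hext
  filter_upwards [hadm.v_pos hν, hadm.2.2.1, hmax] with t hv hbound hmax htI
  obtain ⟨hmaximal, hham⟩ := hmax htI
  simp only [phiV, husing t htI, mul_zero, add_zero] at hmaximal hham
  have hphiV : 0 < -(p t).1 :=
    lt_of_le_of_ne (nonneg_of_mul_nonneg_right (hham ▸ hlam) (hv htI))
      (neg_ne_zero.2 (hpx t htI)).symm
  have hvη : v t = η :=
    le_antisymm (hbound htI).2.2
      (le_of_mul_le_mul_right (hmaximal 0 (by norm_num) η ⟨hνη, le_rfl⟩) hphiV)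
  refine ⟨hvη, ?_⟩
  rw [hvη] at hham
  field_simp [(hν.trans_le hνη).ne']
  linarith

end ReducedExtremal

/-- Along a `u`-singular extremal of the reduced system, the trajectory lies on the
`x`-axis, the covector is constant with `p_y = 0` and `p_x < 0`, the control `u`
vanishes a.e., and the linear velocity is maximal (`v = η`) a.e. -/
theorem reduced_u_singular (ν η : ℝ) (hν : 0 < ν) (hνη : ν ≤ η)
    (t0 t1 : ℝ) (ht : t0 < t1)
    (p q : ℝ → ℝ × ℝ) (u v : ℝ → ℝ) (lam : ℝ)
    (hext : ReducedExtremal ν η t0 t1 p q u v lam)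
    (husing : ∀ t ∈ Icc t0 t1, phiU p q t = 0) :
    (∀ t ∈ Icc t0 t1, (q t).2 = 0) ∧
    (∀ t ∈ Icc t0 t1, p t = p t0) ∧
    (p t0).2 = 0 ∧ (p t0).1 < 0 ∧
    (∀ᵐ t ∂volume, t ∈ Icc t0 t1 → u t = 0) ∧
    (∀ᵐ t ∂volume, t ∈ Icc t0 t1 → v t = η) := by
  have ht0 : t0 ∈ Icc t0 t1 := left_mem_Icc.2 ht.le
  have hpy := hext.p_snd_eq_zero hν ht husing
  have hvp := hext.v_eq_and_p_fst_eq hν hνη ht husing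
  have hpx : ∀ t ∈ Icc t0 t1, (p t).1 = -(lam / η) :=
    eqOn_Icc_of_ae_eq_const ht (continuous_fst.comp_continuousOn hext.continuousOn_p)
      (by filter_upwards [hvp] with t h htI using (h htI).2)
  have hpx0 : (p t0).1 ≤ 0 := by
    rw [hpx t0 ht0, neg_nonpos]
    exact div_nonneg hext.2.2.2.2.1 (hν.le.trans hνη)
  refine ⟨hext.q_snd_eq_zero hν ht husing, fun t htI => ?_, hpy t0 ht0,
    hpx0.lt_of_ne (hext.p_fst_ne_zero hν ht husing t0 ht0), hext.u_eq_zero hν ht husing,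
    by filter_upwards [hvp] with t h htI using (h htI).1⟩
  exact Prod.ext (by rw [hpx t htI, hpx t0 ht0]) (by rw [hpy t htI, hpy t0 ht0])
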